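/- If E is an algebraic extension field of F inside ℂ, then D_{R,E} = D_{R,F} for every subring R of ℂ. -/

import Mathlib

open Filter Topology Polynomial

set_option maxHeartbeats 1000000
set_option synthInstance.maxHeartbeats 400000

/-- A sequence is P-recursive over a subfield `F` of `ℂ`: it satisfies a nonzero
linear recurrence with polynomial coefficients whose coefficients lie in `F`. -/
def IsPRecursiveOver (F : Subfield ℂ) (a : ℕ → ℂ) : Prop :=
  ∃ r : ℕ, ∃ p : Fin (r + 1) → Polynomial ℂ,
    (∀ j, ∀ k, (p j).coeff k ∈ F) ∧ p (Fin.last r) ≠ 0 ∧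
    ∀ n : ℕ, ∑ j : Fin (r + 1), (p j).eval (n : ℂ) * a (n + (j : ℕ)) = 0


/-- `ξ` is a D-finite number w.r.t. a subring `R` and subfield `F` of `ℂ`. -/
def DFiniteNum (R : Subring ℂ) (F : Subfield ℂ) (ξ : ℂ) : Prop :=
  ∃ a : ℕ → ℂ, (∀ n, a n ∈ R) ∧ IsPRecursiveOver F a ∧ Tendsto a atTop (𝓝 ξ)

section
variable (r : ℕ) (p : Fin (r+1) → Polynomial ℂ) (a : ℕ → ℂ)

noncomputable def sig (q : Polynomial ℂ) : Polynomial ℂ := q.comp (X + C 1)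

lemma sig_eval (q : Polynomial ℂ) (n : ℕ) : (sig q).eval ((n : ℂ)) = q.eval (((n + 1 : ℕ) : ℂ)) := by
  simp [sig, eval_comp]

noncomputable def Qr : ℕ → Polynomial ℂ
  | 0 => if 0 < r then 1 else p (Fin.last r)
  | (k+1) => if k+1 < r then 1 else sig (Qr k) * p (Fin.last r)

noncomputable def ur : ℕ → Fin r → Polynomial ℂ
  | 0 => fun i => if (i : ℕ) = 0 then 1 else 0
  | (k+1) => fun i =>
      if k+1 < r then (if (i : ℕ) = k+1 then 1 else 0)
      else (if h : 0 < (i : ℕ) then p (Fin.last r) * sig (ur k ⟨(i : ℕ) - 1, by omega⟩) else 0)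
           - sig (ur k ⟨r - 1, Nat.sub_lt i.pos Nat.one_pos⟩) * p i.castSucc

lemma delta_sum {r t : ℕ} (ht : t < r) (x : ℂ) (f : ℕ → ℂ) (g : Fin r → Polynomial ℂ)
    (hg : ∀ j, g j = if (j : ℕ) = t then 1 else 0) :
    ∑ j : Fin r, (g j).eval x * f (j : ℕ) = f t := by
  rw [Finset.sum_eq_single_of_mem (⟨t, ht⟩ : Fin r) (Finset.mem_univ _)]
  · simp [hg]
  · intro j _ hj
    have : (j : ℕ) ≠ t := fun h => hj (Fin.ext h)
    simp [hg, this]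

lemma invariant
    (hrec : ∀ n : ℕ, ∑ j : Fin (r+1), (p j).eval (n : ℂ) * a (n + (j : ℕ)) = 0) :
    ∀ k n : ℕ, (Qr r p k).eval (n : ℂ) * a (n + k)
      = ∑ j : Fin r, (ur r p k j).eval (n : ℂ) * a (n + (j : ℕ)) := by
  intro k
  induction k with
  | zero =>
    intro n
    by_cases h : 0 < r
    · rw [show (Qr r p 0) = 1 by simp [Qr, h]]
      rw [delta_sum h ((n:ℂ)) (fun t => a (n+t)) (ur r p 0) (fun j => rfl)]
      simp
    · -- r = 0
      obtain rfl : r = 0 := by omega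
      have h0 := hrec n
      simp only [Fin.sum_univ_succ, Fin.sum_univ_zero] at h0
      rw [show (Qr 0 p 0) = p (Fin.last 0) by simp [Qr]]
      have : Finset.univ (α := Fin 0) = ∅ := rfl
      rw [this, Finset.sum_empty]
      simpa using h0
  | succ k ih =>
    intro n
    by_cases h : k + 1 < r
    · rw [show (Qr r p (k+1)) = 1 by simp [Qr, h]]
      rw [delta_sum h ((n:ℂ)) (fun t => a (n+t)) (ur r p (k+1)) (fun j => by simp [ur, h])]
      simp
    · -- k+1 ≥ r
      have hQ : Qr r p (k+1) = sig (Qr r p k) * p (Fin.last r) := by simp [Qr, h]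
      rcases Nat.eq_zero_or_pos r with hr0 | hrpos
      · -- r = 0 : both sides zero-ish
        subst hr0
        have ihn := ih (n+1)
        have : Finset.univ (α := Fin 0) = ∅ := rfl
        rw [this, Finset.sum_empty] at ihn ⊢
        rw [hQ, eval_mul, sig_eval]
        have : n + 1 + k = n + (k + 1) := by omega
        rw [this] at ihn
        rw [mul_assoc, mul_comm ((p (Fin.last 0)).eval _), ← mul_assoc, ihn, zero_mul]
      · -- r = s+1
        obtain ⟨s, rfl⟩ : ∃ s, r = s + 1 := ⟨r - 1, by omega⟩
        have ihn := ih (n+1)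
        -- recurrence at n
        have hre : (p (Fin.last (s+1))).eval (n:ℂ) * a (n + (s+1))
            = - ∑ j : Fin (s+1), (p j.castSucc).eval (n:ℂ) * a (n + (j:ℕ)) := by
          have := hrec n
          rw [Fin.sum_univ_castSucc] at this
          have hlast : ((Fin.last (s+1) : Fin (s+2)) : ℕ) = s+1 := rfl
          simp only [Fin.coe_castSucc, hlast] at this
          linear_combination this
        -- unfold u at k+1
        have hu : ∀ i : Fin (s+1), ur (s+1) p (k+1) i
            = (if hh : 0 < (i : ℕ) then p (Fin.last (s+1)) * sig (ur (s+1) p k ⟨(i:ℕ)-1, by omega⟩) else 0)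
              - sig (ur (s+1) p k ⟨s, by omega⟩) * p i.castSucc := by
          intro i
          simp only [ur]
          rw [if_neg h]
          rfl
        have hterm : ∀ i : Fin (s+1), (ur (s+1) p (k+1) i).eval (n:ℂ)
            = (if 0 < (i:ℕ) then (p (Fin.last (s+1))).eval (n:ℂ) * (ur (s+1) p k ⟨(i:ℕ)-1, by omega⟩).eval (((n+1:ℕ)):ℂ) else 0)
              - (ur (s+1) p k ⟨s, by omega⟩).eval (((n+1:ℕ)):ℂ) * (p i.castSucc).eval (n:ℂ) := by
          intro i
          rw [hu i, eval_sub, eval_mul, sig_eval]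
          congr 1
          split_ifs with hh
          · rw [eval_mul, sig_eval]
          · exact eval_zero
        have hre' : ∑ j : Fin (s+1), (p j.castSucc).eval (n:ℂ) * a (n + (j:ℕ))
            = -((p (Fin.last (s+1))).eval (n:ℂ) * a (n + (s+1))) := by
          linear_combination hre
        have hsum : ∑ i : Fin (s+1), (ur (s+1) p (k+1) i).eval (n:ℂ) * a (n + (i:ℕ))
            = (∑ i : Fin (s+1), (if 0 < (i:ℕ) then (p (Fin.last (s+1))).eval (n:ℂ) * (ur (s+1) p k ⟨(i:ℕ)-1, by omega⟩).eval (((n+1:ℕ)):ℂ) else 0) * a (n + (i:ℕ)))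
              - (ur (s+1) p k ⟨s, by omega⟩).eval (((n+1:ℕ)):ℂ) * ∑ i : Fin (s+1), (p i.castSucc).eval (n:ℂ) * a (n + (i:ℕ)) := by
          rw [Finset.mul_sum, ← Finset.sum_sub_distrib]
          exact Finset.sum_congr rfl fun i _ => by rw [hterm i, sub_mul]; ring
        have hS1 : (∑ i : Fin (s+1), (if 0 < (i:ℕ) then (p (Fin.last (s+1))).eval (n:ℂ) * (ur (s+1) p k ⟨(i:ℕ)-1, by omega⟩).eval (((n+1:ℕ)):ℂ) else 0) * a (n + (i:ℕ)))
            = (p (Fin.last (s+1))).eval (n:ℂ) * ∑ i' : Fin s, (ur (s+1) p k i'.castSucc).eval (((n+1:ℕ)):ℂ) * a ((n+1) + (i':ℕ)) := by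
          rw [Fin.sum_univ_succ, Finset.mul_sum]
          have h00 : (if 0 < ((0 : Fin (s+1)) : ℕ) then (p (Fin.last (s+1))).eval (n:ℂ) * (ur (s+1) p k ⟨((0 : Fin (s+1)) : ℕ)-1, by omega⟩).eval (((n+1:ℕ)):ℂ) else 0) = 0 := by
            rw [if_neg]
            simp
          rw [h00, zero_mul, zero_add]
          refine Finset.sum_congr rfl fun i' _ => ?_
          have hpos : 0 < ((i'.succ : Fin (s+1)) : ℕ) := by simp
          rw [if_pos hpos]
          have hidx : (⟨((i'.succ : Fin (s+1)) : ℕ) - 1, by omega⟩ : Fin (s+1)) = i'.castSucc := by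
            apply Fin.ext; simp
          rw [hidx]
          have hv : ((i'.succ : Fin (s+1)) : ℕ) = (i' : ℕ) + 1 := Fin.val_succ i'
          rw [hv]
          have hn' : n + ((i' : ℕ) + 1) = (n + 1) + (i' : ℕ) := by omega
          rw [hn']
          ring
        have hsplit : ∑ j : Fin (s+1), (ur (s+1) p k j).eval (((n+1:ℕ)):ℂ) * a ((n+1) + (j:ℕ))
            = (∑ i' : Fin s, (ur (s+1) p k i'.castSucc).eval (((n+1:ℕ)):ℂ) * a ((n+1) + (i':ℕ)))
              + (ur (s+1) p k (Fin.last s)).eval (((n+1:ℕ)):ℂ) * a ((n+1) + s) := by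
          rw [Fin.sum_univ_castSucc]
          simp [Fin.coe_castSucc, Fin.val_last]
        have hlast' : (⟨s, by omega⟩ : Fin (s+1)) = Fin.last s := rfl
        rw [hsum, hS1, hre', hlast']
        rw [hsplit] at ihn
        have e1 : n + 1 + k = n + (k+1) := by omega
        have e2 : n + 1 + s = n + (s+1) := by omega
        rw [e1, e2] at ihn
        rw [hQ, eval_mul, sig_eval]
        linear_combination ((p (Fin.last (s+1))).eval (n:ℂ)) * ihn


lemma sig_ne_zero {q : Polynomial ℂ} (h : q ≠ 0) : sig q ≠ 0 :=
  fun h0 => h (comp_X_add_C_eq_zero_iff.mp h0)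

end



section PolyIn
variable {S : Type*} [SetLike S ℂ] [SubringClass S ℂ] (s : S)

def polyIn (q : Polynomial ℂ) : Prop := ∀ i, q.coeff i ∈ s

lemma polyIn_zero : polyIn s 0 := fun i => by simp [zero_mem]
lemma polyIn_one : polyIn s 1 := fun i => by
  rw [coeff_one]
  split_ifs
  · exact one_mem s
  · exact zero_mem s
lemma polyIn_C {c : ℂ} (hc : c ∈ s) : polyIn s (C c) := fun i => by
  rw [coeff_C]
  split_ifs
  · exact hc
  · exact zero_mem s
lemma polyIn_natCast (n : ℕ) : polyIn s ((n : ℂ[X])) := by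
  rw [← Polynomial.C_eq_natCast]
  exact polyIn_C s (natCast_mem s n)
lemma polyIn_X : polyIn s X := fun i => by
  rw [coeff_X]
  split_ifs
  · exact one_mem s
  · exact zero_mem s
lemma polyIn_add {q q' : Polynomial ℂ} (h : polyIn s q) (h' : polyIn s q') :
    polyIn s (q + q') := fun i => by
  rw [coeff_add]; exact add_mem (h i) (h' i)
lemma polyIn_neg {q : Polynomial ℂ} (h : polyIn s q) : polyIn s (-q) := fun i => by
  rw [coeff_neg]; exact neg_mem (h i)
lemma polyIn_sub {q q' : Polynomial ℂ} (h : polyIn s q) (h' : polyIn s q') :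
    polyIn s (q - q') := by
  rw [sub_eq_add_neg]; exact polyIn_add s h (polyIn_neg s h')
lemma polyIn_mul {q q' : Polynomial ℂ} (h : polyIn s q) (h' : polyIn s q') :
    polyIn s (q * q') := fun i => by
  rw [coeff_mul]
  exact sum_mem fun x _ => mul_mem (h x.1) (h' x.2)
lemma polyIn_prod {ι : Type*} (t : Finset ι) (f : ι → Polynomial ℂ)
    (h : ∀ i ∈ t, polyIn s (f i)) : polyIn s (∏ i ∈ t, f i) := by
  classical
  induction t using Finset.induction_on with
  | empty => simpa using polyIn_one s
  | insert _ _ hni ih =>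
    rw [Finset.prod_insert hni]
    exact polyIn_mul s (h _ (Finset.mem_insert_self _ _))
      (ih fun i hi => h i (Finset.mem_insert_of_mem hi))
lemma polyIn_monomial {n : ℕ} {c : ℂ} (hc : c ∈ s) : polyIn s (monomial n c) := fun i => by
  rw [coeff_monomial]
  split_ifs
  · exact hc
  · exact zero_mem s
lemma polyIn_sig {q : Polynomial ℂ} (h : polyIn s q) : polyIn s (sig q) := by
  intro k
  have hcomp : sig q = ∑ i ∈ q.support, C (q.coeff i) * (X + 1) ^ i := by
    rw [sig, comp, eval₂_eq_sum]
    rw [Polynomial.sum]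
    refine Finset.sum_congr rfl fun i _ => ?_
    rw [C_1]
  rw [hcomp, finset_sum_coeff]
  refine sum_mem fun i _ => ?_
  rw [coeff_C_mul, coeff_X_add_one_pow]
  exact mul_mem (h i) (natCast_mem s _)
end PolyIn

section Frac
variable (F : Subfield ℂ)

noncomputable abbrev phiRF : Polynomial ℂ →+* RatFunc ℂ := algebraMap (Polynomial ℂ) (RatFunc ℂ)


lemma phiRF_ne {q : Polynomial ℂ} (hq : q ≠ 0) : phiRF q ≠ 0 := fun h0 =>
  hq ((RatFunc.algebraMap_injective ℂ) (by rw [h0, map_zero]))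

noncomputable def fracSubfield : Subfield (RatFunc ℂ) where
  carrier := {x | ∃ f g : Polynomial ℂ, polyIn F f ∧ polyIn F g ∧ g ≠ 0 ∧ x = phiRF f / phiRF g}
  mul_mem' := by
    rintro x y ⟨f, g, hf, hg, hg0, rfl⟩ ⟨f', g', hf', hg', hg0', rfl⟩
    exact ⟨f * f', g * g', fun i => (polyIn_mul F hf hf') i, fun i => (polyIn_mul F hg hg') i,
      mul_ne_zero hg0 hg0', by rw [map_mul, map_mul, div_mul_div_comm]⟩
  one_mem' := ⟨1, 1, polyIn_one F, polyIn_one F, one_ne_zero, by simp⟩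
  add_mem' := by
    rintro x y ⟨f, g, hf, hg, hg0, rfl⟩ ⟨f', g', hf', hg', hg0', rfl⟩
    refine ⟨f * g' + g * f', g * g', polyIn_add F (polyIn_mul F hf hg') (polyIn_mul F hg hf'),
      polyIn_mul F hg hg', mul_ne_zero hg0 hg0', ?_⟩
    rw [div_add_div _ _ (phiRF_ne hg0) (phiRF_ne hg0')]
    push_cast [map_mul, map_add]
    ring_nf
  zero_mem' := ⟨0, 1, polyIn_zero F, polyIn_one F, one_ne_zero, by simp⟩
  neg_mem' := by
    rintro x ⟨f, g, hf, hg, hg0, rfl⟩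
    exact ⟨-f, g, polyIn_neg F hf, hg, hg0, by rw [map_neg]; exact (neg_div _ _).symm⟩
  inv_mem' := by
    rintro x ⟨f, g, hf, hg, hg0, rfl⟩
    by_cases hf0 : f = 0
    · exact ⟨0, 1, polyIn_zero F, polyIn_one F, one_ne_zero, by simp [hf0]⟩
    · exact ⟨g, f, hg, hf, hf0, inv_div _ _⟩

lemma mem_fracSubfield {x : RatFunc ℂ} :
    x ∈ fracSubfield F ↔ ∃ f g : Polynomial ℂ, polyIn F f ∧ polyIn F g ∧ g ≠ 0 ∧
      x = phiRF f / phiRF g := Iff.rfl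

lemma poly_mem_fracSubfield {f : Polynomial ℂ} (hf : polyIn F f) : phiRF f ∈ fracSubfield F :=
  (mem_fracSubfield F).mpr ⟨f, 1, hf, polyIn_one F, one_ne_zero, by simp⟩
end Frac
lemma polyIn_Xpow {S : Type*} [SetLike S ℂ] [SubringClass S ℂ] (s : S) (n : ℕ) :
    polyIn s (X ^ n) := fun i => by
  rw [coeff_X_pow]
  split_ifs
  · exact one_mem s
  · exact zero_mem s

noncomputable def Msub (F : Subfield ℂ) (t : Finset ℂ) :
    Submodule (fracSubfield F) (RatFunc ℂ) :=
  Submodule.span (fracSubfield F) (insert (1 : RatFunc ℂ) (RatFunc.C '' (↑t : Set ℂ)))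

instance Msub_finite (F : Subfield ℂ) (t : Finset ℂ) : Module.Finite (fracSubfield F) (Msub F t) :=
  FiniteDimensional.span_of_finite _ ((t.finite_toSet.image _).insert 1)

lemma subfield_smul {L : Type*} [Field L] (S : Subfield L) (c : S) (x : L) :
    c • x = (c : L) * x := rfl

lemma C_mem_Msub (F : Subfield ℂ) (t : Finset ℂ) {x : ℂ}
    (hx : x ∈ Submodule.span F (↑t : Set ℂ)) : RatFunc.C x ∈ Msub F t := by
  refine Submodule.span_induction ?_ ?_ ?_ ?_ hx
  · intro y hy
    exact Submodule.subset_span (Set.mem_insert_iff.mpr (Or.inr ⟨y, hy, rfl⟩))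
  · rw [map_zero]
    exact Submodule.zero_mem _
  · intro y z _ _ hy hz
    rw [map_add]
    exact Submodule.add_mem _ hy hz
  · intro a y _ hy
    have h1 : (a • y : ℂ) = (a : ℂ) * y := rfl
    have h2 : RatFunc.C ((a : ℂ) * y) = RatFunc.C (a : ℂ) * RatFunc.C y := map_mul _ _ _
    have h3 : RatFunc.C (a : ℂ) ∈ fracSubfield F := by
      have h4 : RatFunc.C (a : ℂ) = phiRF (Polynomial.C (a : ℂ)) := (RatFunc.algebraMap_C _).symm
      rw [h4]
      exact poly_mem_fracSubfield F (polyIn_C F a.2)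
    rw [h1, h2]
    have := Submodule.smul_mem (Msub F t) (⟨_, h3⟩ : fracSubfield F) hy
    rwa [subfield_smul] at this
  
lemma poly_mem_Msub (F : Subfield ℂ) (t : Finset ℂ) {q : Polynomial ℂ}
    (hq : ∀ i, q.coeff i ∈ Submodule.span F (↑t : Set ℂ)) : phiRF q ∈ Msub F t := by
  have hrep : phiRF q = ∑ i ∈ q.support, RatFunc.X ^ i * RatFunc.C (q.coeff i) := by
    conv_lhs => rw [q.as_sum_support]
    rw [map_sum]
    refine Finset.sum_congr rfl fun i _ => ?_
    have : (monomial i) (q.coeff i) = C (q.coeff i) * X ^ i := by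
      rw [← C_mul_X_pow_eq_monomial]
    rw [this, map_mul, map_pow, RatFunc.algebraMap_C, RatFunc.algebraMap_X]
    ring
  rw [hrep]
  refine Submodule.sum_mem _ fun i _ => ?_
  have hX : (RatFunc.X ^ i : RatFunc ℂ) ∈ fracSubfield F := by
    have : (RatFunc.X ^ i : RatFunc ℂ) = phiRF (X ^ i) := by
      rw [map_pow, RatFunc.algebraMap_X]
    rw [this]
    exact poly_mem_fracSubfield F (polyIn_Xpow F i)
  have := Submodule.smul_mem (Msub F t) (⟨_, hX⟩ : fracSubfield F) (C_mem_Msub F t (hq i))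
  rwa [subfield_smul] at this

lemma exists_dep {L : Type*} [Field L] (𝔽 : Subfield L) (M : Submodule 𝔽 L)
    [Module.Finite 𝔽 M] (r : ℕ)
    (v : Fin (Module.finrank 𝔽 (Fin r → M) + 1) → Fin r → M) :
    ∃ c : Fin (Module.finrank 𝔽 (Fin r → M) + 1) → 𝔽,
      (∀ j : Fin r, ∑ k, (c k : L) * ((v k j : L)) = 0) ∧ ∃ k, c k ≠ 0 := by
  haveI : Module.Finite 𝔽 (Fin r → M) := Module.Finite.pi
  have hdep : ¬ LinearIndependent 𝔽 v := by
    intro hli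
    have hcard := hli.fintype_card_le_finrank
    rw [Fintype.card_fin] at hcard
    omega
  obtain ⟨c, hc0, k₀, hk₀⟩ := Fintype.not_linearIndependent_iff.mp hdep
  refine ⟨c, ?_, k₀, hk₀⟩
  intro j
  have h1 := congrFun hc0 j
  have h2 : ((∑ k, c k • v k) j : L) = 0 := by rw [h1]; rfl
  rw [Finset.sum_apply] at h2
  rw [Submodule.coe_sum] at h2
  calc ∑ k, (c k : L) * ((v k j : L)) = ∑ k, (((c k • v k) j : M) : L) := by
        refine Finset.sum_congr rfl fun k _ => ?_
        rw [Pi.smul_apply, Submodule.coe_smul, subfield_smul]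
    _ = 0 := h2

lemma key (F E : Subfield ℂ) (hFE : F ≤ E) (halg : ∀ x ∈ E, IsAlgebraic F x) (a : ℕ → ℂ)
    (h : IsPRecursiveOver E a) : IsPRecursiveOver F a := by
  classical
  obtain ⟨r, p, hcoeff, hlast, hrec⟩ := h
  -- the finite set of coefficients and the f.g. algebra containing them
  set Sset : Set ℂ := ⋃ j : Fin (r+1), ((p j).coeffs : Set ℂ) with hS
  have hSfin : Sset.Finite := Set.finite_iUnion fun j => (p j).coeffs.finite_toSet
  have hSE : ∀ x ∈ Sset, IsIntegral F x := by
    intro x hx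
    simp only [hS, Set.mem_iUnion] at hx
    obtain ⟨j, hj⟩ := hx
    rw [Finset.mem_coe, mem_coeffs_iff] at hj
    obtain ⟨mm, _, rfl⟩ := hj
    exact (halg _ (hcoeff j mm)).isIntegral
  set A : Subalgebra F ℂ := Algebra.adjoin F Sset with hA
  obtain ⟨t, ht⟩ := fg_adjoin_of_finite hSfin hSE
  -- coefficient membership for the recursion polynomials
  have hpA : ∀ j, polyIn A (p j) := by
    intro j i
    by_cases h0 : (p j).coeff i = 0
    · rw [h0]; exact zero_mem A
    · exact Algebra.subset_adjoin (Set.mem_iUnion.mpr ⟨j, Finset.mem_coe.mpr (coeff_mem_coeffs (p := p j) (n := i) h0)⟩)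
  have hQA : ∀ k, polyIn A (Qr r p k) ∧ Qr r p k ≠ 0 := by
    intro k
    induction k with
    | zero =>
      by_cases h0 : 0 < r
      · rw [show Qr r p 0 = 1 by simp [Qr, h0]]
        exact ⟨polyIn_one A, one_ne_zero⟩
      · rw [show Qr r p 0 = p (Fin.last r) by simp [Qr, h0]]
        exact ⟨hpA _, hlast⟩
    | succ k ih =>
      by_cases h0 : k + 1 < r
      · rw [show Qr r p (k+1) = 1 by simp [Qr, h0]]
        exact ⟨polyIn_one A, one_ne_zero⟩
      · rw [show Qr r p (k+1) = sig (Qr r p k) * p (Fin.last r) by simp [Qr, h0]]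
        exact ⟨polyIn_mul A (polyIn_sig A ih.1) (hpA _),
          mul_ne_zero (sig_ne_zero ih.2) hlast⟩
  have huA : ∀ k (j : Fin r), polyIn A (ur r p k j) := by
    intro k
    induction k with
    | zero =>
      intro j
      show polyIn A (if (j : ℕ) = 0 then (1 : Polynomial ℂ) else 0)
      split_ifs
      · exact polyIn_one A
      · exact polyIn_zero A
    | succ k ih =>
      intro j
      by_cases h0 : k + 1 < r
      · rw [show ur r p (k+1) j = if (j : ℕ) = k+1 then 1 else 0 by simp [ur, h0]]
        split_ifs
        · exact polyIn_one A
        · exact polyIn_zero A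
      · rw [show ur r p (k+1) j =
          (if hh : 0 < (j : ℕ) then p (Fin.last r) * sig (ur r p k ⟨(j : ℕ) - 1, by omega⟩) else 0)
           - sig (ur r p k ⟨r - 1, Nat.sub_lt j.pos Nat.one_pos⟩) * p j.castSucc by
            simp only [ur]; rw [if_neg h0]]
        refine polyIn_sub A ?_ (polyIn_mul A (polyIn_sig A (ih _)) (hpA _))
        split_ifs
        · exact polyIn_mul A (hpA _) (polyIn_sig A (ih _))
        · exact polyIn_zero A
  -- membership in the span
  have hspan : ∀ {q : Polynomial ℂ}, polyIn A q → phiRF q ∈ Msub F t := by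
    intro q hq
    refine poly_mem_Msub F t fun i => ?_
    rw [ht]
    exact (Subalgebra.mem_toSubmodule A).mpr (hq i)
  -- the dependent vectors and the linear dependence
  set m := Module.finrank (fracSubfield F) (Fin r → Msub F t) with hm
  set W : Fin (m+1) → Polynomial ℂ := fun k => ∏ i ∈ Finset.univ.erase k, Qr r p (i : ℕ) with hW
  set w : Fin (m+1) → Fin r → Polynomial ℂ := fun k j => W k * ur r p (k : ℕ) j with hw
  have hwA : ∀ k j, polyIn A (w k j) := fun k j =>
    polyIn_mul A (polyIn_prod A (Finset.univ.erase k) (fun i => Qr r p (i : ℕ))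
      fun i _ => (hQA _).1) (huA _ _)
  set v : Fin (m+1) → (Fin r → Msub F t) := fun k j => ⟨phiRF (w k j), hspan (hwA k j)⟩ with hv
  obtain ⟨c, hcoord, k₀, hk₀⟩ := exists_dep (fracSubfield F) (Msub F t) r v
  have hcoord' : ∀ j : Fin r, ∑ k, (c k : RatFunc ℂ) * phiRF (w k j) = 0 := hcoord
  -- clear denominators in the coefficients c
  have hcex : ∀ k, ∃ f g : Polynomial ℂ, polyIn F f ∧ polyIn F g ∧ g ≠ 0 ∧
      (c k : RatFunc ℂ) = phiRF f / phiRF g := fun k => (mem_fracSubfield F).mp (c k).2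
  choose f g hf hg hg0 hfg using hcex
  set D : Polynomial ℂ := ∏ k, g k with hD
  have hD0 : D ≠ 0 := Finset.prod_ne_zero_iff.mpr fun k _ => hg0 k
  set hh : Fin (m+1) → Polynomial ℂ := fun k => f k * ∏ i ∈ Finset.univ.erase k, g i with hhdef
  have hhF : ∀ k, polyIn F (hh k) := fun k =>
    polyIn_mul F (hf k) (polyIn_prod F _ _ fun i _ => hg i)
  have hφh : ∀ k, phiRF (hh k) = (c k : RatFunc ℂ) * phiRF D := by
    intro k
    have hfk : phiRF (f k) = (c k : RatFunc ℂ) * phiRF (g k) := by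
      rw [hfg k, div_mul_cancel₀]
      exact phiRF_ne (hg0 k)
    have hhk : hh k = f k * ∏ i ∈ Finset.univ.erase k, g i := by simp only [hhdef]
    rw [hhk, map_mul, map_prod, hfk, hD, map_prod, mul_assoc]
    congr 1
    exact Finset.mul_prod_erase Finset.univ (fun i => phiRF (g i)) (Finset.mem_univ k)
  have hJ : ∀ j : Fin r, ∑ k, hh k * w k j = 0 := by
    intro j
    apply RatFunc.algebraMap_injective ℂ
    rw [map_sum, map_zero]
    calc ∑ k, phiRF (hh k * w k j) = (∑ k, (c k : RatFunc ℂ) * phiRF (w k j)) * phiRF D := by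
          rw [Finset.sum_mul]
          refine Finset.sum_congr rfl fun k _ => ?_
          rw [map_mul, hφh k]
          ring
      _ = 0 := by rw [hcoord' j, zero_mul]
  -- pointwise identity
  set Qall : Polynomial ℂ := ∏ i : Fin (m+1), Qr r p (i : ℕ) with hQall
  have hQallW : ∀ k : Fin (m+1), Qall = Qr r p (k : ℕ) * W k := fun k =>
    (Finset.mul_prod_erase _ _ (Finset.mem_univ k)).symm
  have hQall0 : Qall ≠ 0 := Finset.prod_ne_zero_iff.mpr fun k _ => (hQA _).2
  have hpoint : ∀ n : ℕ,
      Qall.eval (n : ℂ) * ∑ k : Fin (m+1), (hh k).eval (n : ℂ) * a (n + (k : ℕ)) = 0 := by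
    intro n
    rw [Finset.mul_sum]
    calc ∑ k : Fin (m+1), Qall.eval (n:ℂ) * ((hh k).eval (n:ℂ) * a (n + (k:ℕ)))
        = ∑ k : Fin (m+1), (hh k).eval (n:ℂ) * (W k).eval (n:ℂ)
            * ((Qr r p (k:ℕ)).eval (n:ℂ) * a (n + (k:ℕ))) := by
          refine Finset.sum_congr rfl fun k _ => ?_
          rw [hQallW k, eval_mul]
          ring
      _ = ∑ k : Fin (m+1), ∑ j : Fin r, (hh k * w k j).eval (n:ℂ) * a (n + (j:ℕ)) := by
          refine Finset.sum_congr rfl fun k _ => ?_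
          rw [invariant r p a hrec (k:ℕ) n, Finset.mul_sum]
          refine Finset.sum_congr rfl fun j _ => ?_
          rw [hw]
          simp only [eval_mul]
          ring
      _ = ∑ j : Fin r, (∑ k : Fin (m+1), hh k * w k j).eval (n:ℂ) * a (n + (j:ℕ)) := by
          rw [Finset.sum_comm]
          refine Finset.sum_congr rfl fun j _ => ?_
          rw [← Finset.sum_mul]
          congr 1
          rw [eval_finset_sum]
      _ = 0 := by
          refine Finset.sum_eq_zero fun j _ => ?_
          rw [hJ j, eval_zero, zero_mul]
  -- all large n avoid the roots of Qall
  have hroots : {n : ℕ | Qall.eval (n : ℂ) = 0}.Finite := by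
    have h1 : {x : ℂ | Qall.IsRoot x}.Finite := finite_setOf_isRoot hQall0
    have h2 : {n : ℕ | Qall.eval (n : ℂ) = 0} ⊆ (fun n : ℕ => (n : ℂ)) ⁻¹' {x : ℂ | Qall.IsRoot x} :=
      fun n hn => hn
    exact (h1.preimage (Nat.cast_injective.injOn)).subset h2
  obtain ⟨N, hN⟩ := hroots.bddAbove
  have hNlarge : ∀ n : ℕ, N + 1 ≤ n → Qall.eval (n : ℂ) ≠ 0 := by
    intro n hn h0
    have := hN h0
    omega
  set ρ : Polynomial ℂ := ∏ i ∈ Finset.range (N+1), (X - C (i : ℂ)) with hρ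
  have hρF : polyIn F ρ :=
    polyIn_prod F _ _ fun i _ => polyIn_sub F (polyIn_X F) (polyIn_C F (natCast_mem F i))
  have hρ0 : ρ ≠ 0 := Finset.prod_ne_zero_iff.mpr fun i _ => X_sub_C_ne_zero _
  have hρeval : ∀ n : ℕ, n < N + 1 → ρ.eval (n : ℂ) = 0 := by
    intro n hn
    rw [hρ, eval_prod]
    refine Finset.prod_eq_zero (Finset.mem_range.mpr hn) ?_
    simp
  set q' : ℕ → Polynomial ℂ := fun k => if hk : k < m+1 then ρ * hh ⟨k, hk⟩ else 0 with hq'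
  have hq'F : ∀ k, polyIn F (q' k) := by
    intro k
    simp only [hq']
    by_cases hk : k < m+1
    · rw [dif_pos hk]; exact polyIn_mul F hρF (hhF _)
    · rw [dif_neg hk]; exact polyIn_zero F
  have hq'fin : ∀ k : Fin (m+1), q' (k : ℕ) = ρ * hh k := by
    intro k
    simp only [hq']
    rw [dif_pos k.isLt]
  have hfinal : ∀ n : ℕ, ∑ k ∈ Finset.range (m+1), (q' k).eval (n:ℂ) * a (n + k) = 0 := by
    intro n
    have hconv : ∑ k ∈ Finset.range (m+1), (q' k).eval (n:ℂ) * a (n + k)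
        = ρ.eval (n:ℂ) * ∑ k : Fin (m+1), (hh k).eval (n:ℂ) * a (n + (k:ℕ)) := by
      rw [Finset.mul_sum, ← Fin.sum_univ_eq_sum_range (fun k => (q' k).eval (n:ℂ) * a (n + k)) (m+1)]
      refine Finset.sum_congr rfl fun k _ => ?_
      rw [hq'fin k, eval_mul]
      ring
    rw [hconv]
    rcases lt_or_ge n (N+1) with hn | hn
    · rw [hρeval n hn, zero_mul]
    · rcases mul_eq_zero.mp (hpoint n) with h1 | h1
      · exact absurd h1 (hNlarge n hn)
      · rw [h1, mul_zero]
  have hhk₀ : hh k₀ ≠ 0 := by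
    intro h0
    have h1 := hφh k₀
    rw [h0, map_zero] at h1
    have h2 : (c k₀ : RatFunc ℂ) ≠ 0 := fun h3 => hk₀ (Subtype.ext h3)
    rcases mul_eq_zero.mp h1.symm with h4 | h4
    · exact h2 h4
    · exact absurd h4 (phiRF_ne hD0)
  have hq'k₀ : q' (k₀ : ℕ) ≠ 0 := by
    rw [hq'fin k₀]
    exact mul_ne_zero hρ0 hhk₀
  set sset : Finset ℕ := (Finset.range (m+1)).filter (fun k => q' k ≠ 0) with hsset
  have hne : sset.Nonempty :=
    ⟨(k₀ : ℕ), Finset.mem_filter.mpr ⟨Finset.mem_range.mpr k₀.isLt, hq'k₀⟩⟩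
  set r' : ℕ := sset.max' hne with hr'
  have hr'mem : r' ∈ sset := sset.max'_mem hne
  have hr'lt : r' < m + 1 := Finset.mem_range.mp (Finset.mem_filter.mp hr'mem).1
  have hr'ne : q' r' ≠ 0 := (Finset.mem_filter.mp hr'mem).2
  have hr'max : ∀ k ∈ sset, k ≤ r' := fun k hk => sset.le_max' k hk
  refine ⟨r', fun j => q' (j : ℕ), ?_, ?_, ?_⟩
  · intro j k
    exact hq'F (j : ℕ) k
  · exact hr'ne
  · intro n
    have hconv2 : (∑ j : Fin (r'+1), (q' (j:ℕ)).eval (n:ℂ) * a (n + (j:ℕ)))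
        = ∑ k ∈ Finset.range (r'+1), (q' k).eval (n:ℂ) * a (n+k) :=
      Fin.sum_univ_eq_sum_range (fun k => (q' k).eval (n:ℂ) * a (n+k)) (r'+1)
    rw [hconv2, ← hfinal n]
    refine Finset.sum_subset ?_ ?_
    · intro k hk
      rw [Finset.mem_range] at hk ⊢
      omega
    · intro k hk1 hk2
      rw [Finset.mem_range] at hk1 hk2
      have hk0 : q' k = 0 := by
        by_contra hkk
        have hks : k ∈ sset := Finset.mem_filter.mpr ⟨Finset.mem_range.mpr hk1, hkk⟩
        have := hr'max k hks
        omega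
      rw [hk0, eval_zero, zero_mul]

theorem dfiniteNum_algebraic_ext (R : Subring ℂ) (F E : Subfield ℂ) (hFE : F ≤ E)
    (halg : ∀ x ∈ E, IsAlgebraic F x) :
    ∀ ξ : ℂ, DFiniteNum R E ξ ↔ DFiniteNum R F ξ := by
  intro ξ
  constructor
  · rintro ⟨a, haR, hrec, hlim⟩
    exact ⟨a, haR, key F E hFE halg a hrec, hlim⟩
  · rintro ⟨a, haR, hrec, hlim⟩
    refine ⟨a, haR, ?_, hlim⟩
    obtain ⟨r, p, hc, hl, hr⟩ := hrec
    exact ⟨r, p, fun j k => hFE (hc j k), hl, hr⟩
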